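/- Let X₁, X₂, Y_r, Ŷ, Y₁, Y₂ be random variables taking finitely many values on a common probability space with I(Ŷ; ⟨X₁, Y₁⟩ | ⟨Y_r, X₂⟩) = 0. Define I₁ = I(Ŷ; Y_r | X₂), I₂⁽ᵗ⁾ = I(⟨X₁,X₂⟩; Y_t) + I(Ŷ; ⟨X₁,Y_t⟩ | X₂) for t = 1, 2, R₁⁽ᵗ⁾(R₂) = max{ min{ I(X₁; ⟨Ŷ,Y_t⟩ | X₂), I₂⁽ᵗ⁾ − R₂ }, I(X₁; Y_t) }, and R₂* = max{ I₁, I(X₂; Y₂ | X₁) + I(Ŷ; ⟨X₁,Y₂⟩ | X₂) }. Then R₁⁽¹⁾(R₂*) − R₁⁽²⁾(R₂*) ≥ min{ I(X₁; ⟨Ŷ,Y₁⟩ | X₂) − I(X₁; Y₂), I₂⁽¹⁾ − I₂⁽²⁾, I(⟨X₁,X₂⟩; Y₁) − I(Ŷ; Y_r | ⟨X₁,X₂,Y₁⟩) − I(X₁; Y₂) }. -/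

import Mathlib

open MeasureTheory

section InformationTheory

variable {Ω : Type*} [MeasurableSpace Ω]

/-- Probability that a finite-valued random variable `X` takes the value `a`. -/
noncomputable def probOf (μ : Measure Ω) {A : Type*} (X : Ω → A) (a : A) : ℝ :=
  (μ (X ⁻¹' {a})).toReal

/-- Shannon entropy (in bits) of a finite-valued random variable `X`
(with the convention `0·log₂ 0 = 0`, automatic since `Real.logb 2 0 = 0`). -/
noncomputable def entropy (μ : Measure Ω) {A : Type*} [Fintype A] (X : Ω → A) : ℝ :=
  -∑ a : A, probOf μ X a * Real.logb 2 (probOf μ X a)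

/-- Conditional Shannon entropy `H(X | Y) = H(X, Y) − H(Y)`. -/
noncomputable def condEntropy (μ : Measure Ω) {A B : Type*} [Fintype A] [Fintype B]
    (X : Ω → A) (Y : Ω → B) : ℝ :=
  entropy μ (fun ω => (X ω, Y ω)) - entropy μ Y

/-- Mutual information `I(X; Y) = H(X) + H(Y) − H(X, Y)`. -/
noncomputable def mutualInfo (μ : Measure Ω) {A B : Type*} [Fintype A] [Fintype B]
    (X : Ω → A) (Y : Ω → B) : ℝ :=
  entropy μ X + entropy μ Y - entropy μ (fun ω => (X ω, Y ω))

/-- Conditional mutual information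
`I(X; Y | Z) = H(X, Z) + H(Y, Z) − H(X, Y, Z) − H(Z)`. -/
noncomputable def condMutualInfo (μ : Measure Ω) {A B C : Type*}
    [Fintype A] [Fintype B] [Fintype C] (X : Ω → A) (Y : Ω → B) (Z : Ω → C) : ℝ :=
  entropy μ (fun ω => (X ω, Z ω)) + entropy μ (fun ω => (Y ω, Z ω))
    - entropy μ (fun ω => ((X ω, Y ω), Z ω)) - entropy μ Z

end InformationTheory

/-!
Since `I₂⁽²⁾ = I(X₁; Y₂) + I(X₂; Y₂ | X₁) + I(Ŷ; X₁, Y₂ | X₂)` by the chain rule, the choice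
of `R₂*` forces `I₂⁽²⁾ − R₂* ≤ I(X₁; Y₂)`, so `R₁⁽²⁾(R₂*) = I(X₁; Y₂)`. Expanding
`I(Ŷ; Y_r, X₁, Y₁ | X₂)` by the chain rule in two orders and using the Markov condition gives
`I₂⁽¹⁾ − I₁ = I(X₁, X₂; Y₁) − I(Ŷ; Y_r | X₁, X₂, Y₁)`; what remains is bookkeeping with `min`
and `max`.
-/

open Function

section Entropy

variable {Ω : Type*} [MeasurableSpace Ω] (μ : Measure Ω)
  {A B C D E : Type*} [Fintype A] [Fintype B] [Fintype C] [Fintype D] [Fintype E]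

lemma entropy_comp_of_injective (X : Ω → A) {f : A → B} (hf : Injective f) :
    entropy μ (fun ω => f (X ω)) = entropy μ X := by
  have hprob : ∀ a, probOf μ (fun ω => f (X ω)) (f a) = probOf μ X a := fun a => by
    simp only [probOf, Set.preimage, Set.mem_singleton_iff, hf.eq_iff]
  have hzero : ∀ b ∉ Set.range f, probOf μ (fun ω => f (X ω)) b = 0 := fun b hb => by
    have : (fun ω => f (X ω)) ⁻¹' {b} = ∅ :=
      Set.eq_empty_of_forall_notMem fun ω hω => hb ⟨X ω, hω⟩
    simp [probOf, this]
  unfold entropy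
  congr 1
  exact (Fintype.sum_of_injective f hf _ _ (fun b hb => by simp [hzero b hb])
    fun a => by rw [hprob]).symm

lemma entropy_prod_comm (X : Ω → A) (Y : Ω → B) :
    entropy μ (fun ω => (Y ω, X ω)) = entropy μ (fun ω => (X ω, Y ω)) :=
  entropy_comp_of_injective μ (fun ω => (X ω, Y ω)) Prod.swap_injective

lemma entropy_prod_assoc (X : Ω → A) (Y : Ω → B) (Z : Ω → C) :
    entropy μ (fun ω => (X ω, (Y ω, Z ω))) = entropy μ (fun ω => ((X ω, Y ω), Z ω)) :=
  entropy_comp_of_injective μ (fun ω => ((X ω, Y ω), Z ω)) (Equiv.prodAssoc A B C).injective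

lemma condMutualInfo_comp_of_injective (X : Ω → A) (Y : Ω → B) (Z : Ω → C)
    {f : B → D} {g : C → E} (hf : Injective f) (hg : Injective g) :
    condMutualInfo μ X (fun ω => f (Y ω)) (fun ω => g (Z ω)) = condMutualInfo μ X Y Z := by
  have hXZ : entropy μ (fun ω => (X ω, g (Z ω))) = entropy μ (fun ω => (X ω, Z ω)) :=
    entropy_comp_of_injective μ (fun ω => (X ω, Z ω)) (f := Prod.map id g)
      (injective_id.prodMap hg)
  have hYZ : entropy μ (fun ω => (f (Y ω), g (Z ω))) = entropy μ (fun ω => (Y ω, Z ω)) :=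
    entropy_comp_of_injective μ (fun ω => (Y ω, Z ω)) (f := Prod.map f g) (hf.prodMap hg)
  have hXYZ : entropy μ (fun ω => ((X ω, f (Y ω)), g (Z ω)))
      = entropy μ (fun ω => ((X ω, Y ω), Z ω)) :=
    entropy_comp_of_injective μ (fun ω => ((X ω, Y ω), Z ω)) (f := Prod.map (Prod.map id f) g)
      ((injective_id.prodMap hf).prodMap hg)
  simp only [condMutualInfo]
  rw [hXZ, hYZ, hXYZ, entropy_comp_of_injective μ Z hg]

lemma mutualInfo_prod_left (X : Ω → A) (Y : Ω → B) (Z : Ω → C) :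
    mutualInfo μ (fun ω => (X ω, Y ω)) Z = mutualInfo μ X Z + condMutualInfo μ Y Z X := by
  have hXY := entropy_prod_comm μ X Y
  have hXZ := entropy_prod_comm μ X Z
  have hXYZ : entropy μ (fun ω => ((Y ω, Z ω), X ω)) = entropy μ (fun ω => ((X ω, Y ω), Z ω)) :=
    entropy_comp_of_injective μ (fun ω => ((X ω, Y ω), Z ω)) (f := fun p => ((p.1.2, p.2), p.1.1))
      fun _ _ h => by simp_all [Prod.ext_iff]
  simp only [mutualInfo, condMutualInfo]
  linarith

lemma condMutualInfo_prod_right (X : Ω → A) (Y : Ω → B) (Y' : Ω → C) (Z : Ω → D) :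
    condMutualInfo μ X (fun ω => (Y ω, Y' ω)) Z
      = condMutualInfo μ X Y Z + condMutualInfo μ X Y' (fun ω => (Y ω, Z ω)) := by
  have hXYZ := entropy_prod_assoc μ X Y Z
  have hYY'Z :
      entropy μ (fun ω => (Y' ω, (Y ω, Z ω))) = entropy μ (fun ω => ((Y ω, Y' ω), Z ω)) :=
    entropy_comp_of_injective μ (fun ω => ((Y ω, Y' ω), Z ω)) (f := fun p => (p.1.2, (p.1.1, p.2)))
      fun _ _ h => by simp_all [Prod.ext_iff]
  have hXYY'Z : entropy μ (fun ω => ((X ω, Y' ω), (Y ω, Z ω)))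
      = entropy μ (fun ω => ((X ω, (Y ω, Y' ω)), Z ω)) :=
    entropy_comp_of_injective μ (fun ω => ((X ω, (Y ω, Y' ω)), Z ω))
      (f := fun p => ((p.1.1, p.1.2.2), (p.1.2.1, p.2))) fun _ _ h => by simp_all [Prod.ext_iff]
  simp only [condMutualInfo]
  linarith

lemma condMutualInfo_add_condMutualInfo_comm (X : Ω → A) (Y : Ω → B) (Y' : Ω → C) (Z : Ω → D) :
    condMutualInfo μ X Y Z + condMutualInfo μ X Y' (fun ω => (Y ω, Z ω))
      = condMutualInfo μ X Y' Z + condMutualInfo μ X Y (fun ω => (Y' ω, Z ω)) := by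
  rw [← condMutualInfo_prod_right, ← condMutualInfo_prod_right,
    ← condMutualInfo_comp_of_injective μ X (fun ω => (Y ω, Y' ω)) Z Prod.swap_injective injective_id]
  rfl

end Entropy

lemma min_sub_le_max_min_sub_max_min {a₁ a₂ b₁ b₂ i c m₁ m₂ k : ℝ}
    (hb₂ : b₂ = m₂ + c) (hk : b₁ - i = k) :
    max (min a₁ (b₁ - max i c)) m₁ - max (min a₂ (b₂ - max i c)) m₂
      ≥ min (a₁ - m₂) (min (b₁ - b₂) (k - m₂)) := by
  have hR₂ : max (min a₂ (b₂ - max i c)) m₂ = m₂ :=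
    max_eq_right (min_le_of_right_le (by linarith [le_max_right i c]))
  rw [hR₂, ge_iff_le, le_sub_iff_add_le]
  refine le_trans ?_ (le_max_left _ _)
  have h₁ := min_le_left (a₁ - m₂) (min (b₁ - b₂) (k - m₂))
  have h₂ := min_le_right (a₁ - m₂) (min (b₁ - b₂) (k - m₂))
  have h₃ := min_le_left (b₁ - b₂) (k - m₂)
  have h₄ := min_le_right (b₁ - b₂) (k - m₂)
  rcases max_cases i c with ⟨h, -⟩ | ⟨h, -⟩ <;>
    exact le_min (by linarith) (by rw [h]; linarith)

theorem stmt_14_general {Ω : Type*} [MeasurableSpace Ω] (μ : MeasureTheory.Measure Ω)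
    {𝒳₁ 𝒳₂ 𝒴r 𝒴h 𝒴₁ 𝒴₂ : Type*}
    [Fintype 𝒳₁] [Fintype 𝒳₂] [Fintype 𝒴r] [Fintype 𝒴h] [Fintype 𝒴₁] [Fintype 𝒴₂]
    (X₁ : Ω → 𝒳₁) (X₂ : Ω → 𝒳₂) (Yr : Ω → 𝒴r) (Yh : Ω → 𝒴h)
    (Y₁ : Ω → 𝒴₁) (Y₂ : Ω → 𝒴₂)
    (hMarkov : condMutualInfo μ Yh (fun ω => (X₁ ω, Y₁ ω)) (fun ω => (Yr ω, X₂ ω)) = 0) :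
    let I₁ : ℝ := condMutualInfo μ Yh Yr X₂
    let I₂₁ : ℝ := mutualInfo μ (fun ω => (X₁ ω, X₂ ω)) Y₁
      + condMutualInfo μ Yh (fun ω => (X₁ ω, Y₁ ω)) X₂
    let I₂₂ : ℝ := mutualInfo μ (fun ω => (X₁ ω, X₂ ω)) Y₂
      + condMutualInfo μ Yh (fun ω => (X₁ ω, Y₂ ω)) X₂
    let R₂s : ℝ := max I₁
      (condMutualInfo μ X₂ Y₂ X₁ + condMutualInfo μ Yh (fun ω => (X₁ ω, Y₂ ω)) X₂)
    let R₁₁ : ℝ := max (min (condMutualInfo μ X₁ (fun ω => (Yh ω, Y₁ ω)) X₂)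
      (I₂₁ - R₂s)) (mutualInfo μ X₁ Y₁)
    let R₁₂ : ℝ := max (min (condMutualInfo μ X₁ (fun ω => (Yh ω, Y₂ ω)) X₂)
      (I₂₂ - R₂s)) (mutualInfo μ X₁ Y₂)
    R₁₁ - R₁₂ ≥
      min (condMutualInfo μ X₁ (fun ω => (Yh ω, Y₁ ω)) X₂ - mutualInfo μ X₁ Y₂)
        (min (I₂₁ - I₂₂)
          (mutualInfo μ (fun ω => (X₁ ω, X₂ ω)) Y₁
            - condMutualInfo μ Yh Yr (fun ω => (X₁ ω, X₂ ω, Y₁ ω))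
            - mutualInfo μ X₁ Y₂)) := by
  intro I₁ I₂₁ I₂₂ R₂s R₁₁ R₁₂
  have hI₂₂ : I₂₂ = mutualInfo μ X₁ Y₂ +
      (condMutualInfo μ X₂ Y₂ X₁ + condMutualInfo μ Yh (fun ω => (X₁ ω, Y₂ ω)) X₂) := by
    simp only [I₂₂]
    rw [mutualInfo_prod_left]
    ring
  have hI₂₁ : I₂₁ - I₁ = mutualInfo μ (fun ω => (X₁ ω, X₂ ω)) Y₁
      - condMutualInfo μ Yh Yr (fun ω => (X₁ ω, X₂ ω, Y₁ ω)) := by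
    have hexchange := condMutualInfo_add_condMutualInfo_comm μ Yh Yr (fun ω => (X₁ ω, Y₁ ω)) X₂
    have hrelabel : condMutualInfo μ Yh Yr (fun ω => (X₁ ω, X₂ ω, Y₁ ω))
        = condMutualInfo μ Yh Yr (fun ω => ((X₁ ω, Y₁ ω), X₂ ω)) :=
      condMutualInfo_comp_of_injective μ Yh Yr (fun ω => ((X₁ ω, Y₁ ω), X₂ ω)) (f := id)
        injective_id (g := fun p => (p.1.1, p.2, p.1.2)) fun _ _ h => by simp_all [Prod.ext_iff]
    simp only [I₂₁, I₁]
    linarith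
  exact min_sub_le_max_min_sub_max_min hI₂₂ hI₂₁

/-- The lower bound (equation (6)) of the paper on the secrecy rate achievable
in the very strong eavesdropping case: with the choice
`R₂ = R₂* = max{I₁, I(X₂;Y₂|X₁) + I(Ŷ;X₁,Y₂|X₂)}`, the difference
`R₁⁽¹⁾(R₂*) − R₁⁽²⁾(R₂*)` is bounded below by the minimum of three terms. -/
theorem stmt_14 {Ω : Type*} [MeasurableSpace Ω] (μ : MeasureTheory.Measure Ω)
    [MeasureTheory.IsProbabilityMeasure μ]
    {𝒳₁ 𝒳₂ 𝒴r 𝒴h 𝒴₁ 𝒴₂ : Type*}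
    [Fintype 𝒳₁] [Fintype 𝒳₂] [Fintype 𝒴r] [Fintype 𝒴h] [Fintype 𝒴₁] [Fintype 𝒴₂]
    (X₁ : Ω → 𝒳₁) (X₂ : Ω → 𝒳₂) (Yr : Ω → 𝒴r) (Yh : Ω → 𝒴h)
    (Y₁ : Ω → 𝒴₁) (Y₂ : Ω → 𝒴₂)
    (hMarkov : condMutualInfo μ Yh (fun ω => (X₁ ω, Y₁ ω)) (fun ω => (Yr ω, X₂ ω)) = 0) :
    let I₁ : ℝ := condMutualInfo μ Yh Yr X₂
    let I₂₁ : ℝ := mutualInfo μ (fun ω => (X₁ ω, X₂ ω)) Y₁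
      + condMutualInfo μ Yh (fun ω => (X₁ ω, Y₁ ω)) X₂
    let I₂₂ : ℝ := mutualInfo μ (fun ω => (X₁ ω, X₂ ω)) Y₂
      + condMutualInfo μ Yh (fun ω => (X₁ ω, Y₂ ω)) X₂
    let R₂s : ℝ := max I₁
      (condMutualInfo μ X₂ Y₂ X₁ + condMutualInfo μ Yh (fun ω => (X₁ ω, Y₂ ω)) X₂)
    let R₁₁ : ℝ := max (min (condMutualInfo μ X₁ (fun ω => (Yh ω, Y₁ ω)) X₂)
      (I₂₁ - R₂s)) (mutualInfo μ X₁ Y₁)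
    let R₁₂ : ℝ := max (min (condMutualInfo μ X₁ (fun ω => (Yh ω, Y₂ ω)) X₂)
      (I₂₂ - R₂s)) (mutualInfo μ X₁ Y₂)
    R₁₁ - R₁₂ ≥
      min (condMutualInfo μ X₁ (fun ω => (Yh ω, Y₁ ω)) X₂ - mutualInfo μ X₁ Y₂)
        (min (I₂₁ - I₂₂)
          (mutualInfo μ (fun ω => (X₁ ω, X₂ ω)) Y₁
            - condMutualInfo μ Yh Yr (fun ω => (X₁ ω, X₂ ω, Y₁ ω))
            - mutualInfo μ X₁ Y₂)) :=
  stmt_14_general μ X₁ X₂ Yr Yh Y₁ Y₂ hMarkov
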